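/- Let G = (V,E) be a finite simple graph admitting a k-completion, suppose G is sunflower-reduced, and suppose every set of pairwise true twins of G has at most k + 1 vertices. Then for every K-join B of G, at most k^3 + 4k^2 + 5k + 1 vertices of B belong to a claw or to an induced 4-cycle of G. -/

import Mathlib

open SimpleGraph Finset

variable {V : Type*}

/-- `f` is an (injective, hence linear) umbrella ordering of the graph `G`. -/
def IsUmbrellaOrdering (G : SimpleGraph V) (f : V → ℕ) : Prop :=
  Function.Injective f ∧
    ∀ u v w : V, f u < f v → f v < f w → G.Adj u w → G.Adj u v ∧ G.Adj v w

/-- A graph is a proper interval graph iff it admits an umbrella ordering. -/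
def IsProperIntervalGraph (G : SimpleGraph V) : Prop :=
  ∃ f : V → ℕ, IsUmbrellaOrdering G f

/-- The graph `G + F` obtained by adding the set `F` of pairs as edges. -/
def addEdges (G : SimpleGraph V) (F : Finset (Sym2 V)) : SimpleGraph V :=
  G ⊔ SimpleGraph.fromEdgeSet ↑F

/-- `F` is a completion of `G`: a set of non-loop non-edges whose addition
makes `G` a proper interval graph. -/
def IsCompletion (G : SimpleGraph V) (F : Finset (Sym2 V)) : Prop :=
  (∀ e ∈ F, ¬ e.IsDiag) ∧ (∀ e ∈ F, e ∉ G.edgeSet) ∧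
    IsProperIntervalGraph (addEdges G F)

/-- `F` is a `k`-completion of `G`. -/
def IsKCompletion (G : SimpleGraph V) (k : ℕ) (F : Finset (Sym2 V)) : Prop :=
  IsCompletion G F ∧ F.card ≤ k

/-- `uv` is an extremal edge of `G` with respect to the ordering `f`. -/
def IsExtremalEdge (G : SimpleGraph V) (f : V → ℕ) (u v : V) : Prop :=
  G.Adj u v ∧ f u < f v ∧
    ∀ u' v' : V, G.Adj u' v' → f u' ≤ f u → f v ≤ f v' → u' = u ∧ v' = v

/-- `c` is the center and `l₁, l₂, l₃` the leaves of an induced claw of `G`. -/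
def IsClaw (G : SimpleGraph V) (c l₁ l₂ l₃ : V) : Prop :=
  G.Adj c l₁ ∧ G.Adj c l₂ ∧ G.Adj c l₃ ∧
    ¬ G.Adj l₁ l₂ ∧ ¬ G.Adj l₁ l₃ ∧ ¬ G.Adj l₂ l₃ ∧ l₁ ≠ l₂ ∧ l₁ ≠ l₃ ∧ l₂ ≠ l₃

/-- `a b c d` is an induced 4-cycle of `G` (in this cyclic order). -/
def IsInducedC4 (G : SimpleGraph V) (a b c d : V) : Prop :=
  G.Adj a b ∧ G.Adj b c ∧ G.Adj c d ∧ G.Adj d a ∧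
    ¬ G.Adj a c ∧ ¬ G.Adj b d ∧ a ≠ c ∧ b ≠ d

/-- `x` belongs to some claw of `G` (as center or leaf). -/
def InClaw (G : SimpleGraph V) (x : V) : Prop :=
  ∃ a b c d, IsClaw G a b c d ∧ (x = a ∨ x = b ∨ x = c ∨ x = d)

/-- `x` belongs to some induced 4-cycle of `G`. -/
def InC4 (G : SimpleGraph V) (x : V) : Prop :=
  ∃ a b c d, IsInducedC4 G a b c d ∧ (x = a ∨ x = b ∨ x = c ∨ x = d)

/-- `{x, y, z}` is an independent set of size 3 (a `3K₁`) of `G`. -/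
def IsInd3 (G : SimpleGraph V) (x y z : V) : Prop :=
  x ≠ y ∧ x ≠ z ∧ y ≠ z ∧ ¬ G.Adj x y ∧ ¬ G.Adj x z ∧ ¬ G.Adj y z

/-- `x` belongs to some independent set of size 3 of `G`. -/
def InInd3 (G : SimpleGraph V) (x : V) : Prop := ∃ y z, IsInd3 G x y z

/-- `G` is sunflower-reduced (for the parameter `k`). -/
def SunflowerReduced (G : SimpleGraph V) (k : ℕ) : Prop :=
  ∀ u v : V, u ≠ v → ¬ G.Adj u v →
    {w : V | ∃ c, IsClaw G c u v w}.ncard ≤ k ∧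
    {e : Sym2 V | ∃ a b, e = s(a, b) ∧ IsInducedC4 G u a v b}.ncard ≤ k

/-- `u` and `v` are true twins of `G`: they have the same closed neighborhood. -/
def TrueTwins (G : SimpleGraph V) (u v : V) : Prop :=
  insert u (G.neighborSet u) = insert v (G.neighborSet v)

/-- `b : Fin p → V` enumerates a `K`-join of `G` whose complement is
partitioned into `N`, `L`, `R`, `C`. -/
structure KJoinWith (G : SimpleGraph V) {p : ℕ} (b : Fin p → V)
    (N L R C : Set V) : Prop where
  inj : Function.Injective b
  clique : ∀ i j : Fin p, i ≠ j → G.Adj (b i) (b j)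
  cover : ∀ v : V, v ∉ Set.range b → v ∈ N ∪ L ∪ R ∪ C
  disj : List.Pairwise Disjoint [Set.range b, N, L, R, C]
  nAdj : ∀ v ∈ N, ∀ i, G.Adj v (b i)
  cNotAdj : ∀ v ∈ C, ∀ i, ¬ G.Adj v (b i)
  lrAdj : ∀ v ∈ L ∪ R, ∃ i, G.Adj v (b i)
  lrNotAll : ∀ v ∈ L ∪ R, ∃ i, ¬ G.Adj v (b i)
  rFirst : ∀ r ∈ R, ∀ i : Fin p, i.val = 0 → ¬ G.Adj r (b i)
  lLast : ∀ x ∈ L, ∀ i : Fin p, i.val = p - 1 → ¬ G.Adj x (b i)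
  rMono : ∀ i j : Fin p, i.val + 1 = j.val → ∀ r ∈ R, G.Adj (b i) r → G.Adj (b j) r
  lMono : ∀ i j : Fin p, i.val + 1 = j.val → ∀ x ∈ L, G.Adj (b j) x → G.Adj (b i) x

/-- `B ⊆ V` is a `K`-join of `G`. -/
def IsKJoin (G : SimpleGraph V) (B : Set V) : Prop :=
  ∃ (p : ℕ) (b : Fin p → V) (N L R C : Set V),
    Set.range b = B ∧ KJoinWith G b N L R C

/-- `B` is a clean `K`-join: none of its vertices belongs to a claw or an
induced 4-cycle of `G`. -/
def IsCleanKJoin (G : SimpleGraph V) (B : Set V) : Prop :=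
  IsKJoin G B ∧ ∀ x ∈ B, ¬ InClaw G x ∧ ¬ InC4 G x

/-- `B ⊆ V` is a simple `K`-join of `G` (one of `L`, `R` is empty). -/
def IsSimpleKJoin (G : SimpleGraph V) (B : Set V) : Prop :=
  ∃ (p : ℕ) (b : Fin p → V) (N L R C : Set V),
    Set.range b = B ∧ KJoinWith G b N L R C ∧ (L = ∅ ∨ R = ∅)

/-- `B` is bcc-clean: none of its vertices belongs to a `3K₁` or an induced
4-cycle of `G`. -/
def IsBccClean (G : SimpleGraph V) (B : Set V) : Prop :=
  ∀ x ∈ B, ¬ InInd3 G x ∧ ¬ InC4 G x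

/-- `b : Fin p → V` enumerates (in umbrella order) a 1-branch of `G` with
complement partitioned into `R`, `C`; `b l` is the neighbor of the last
vertex `b (p-1)` of minimal index.  The attachment clique is
`B₁ = {b i : l ≤ i}` and `B^R = {b i : i < l}`. -/
structure OneBranch (G : SimpleGraph V) {p : ℕ} (b : Fin p → V)
    (R C : Set V) (l : Fin p) : Prop where
  pos : 0 < p
  inj : Function.Injective b
  umbrella : ∀ i j m : Fin p, i < j → j < m → G.Adj (b i) (b m) →
    G.Adj (b i) (b j) ∧ G.Adj (b j) (b m)
  connB : (G.induce (Set.range b)).Connected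
  cover : ∀ v : V, v ∉ Set.range b → v ∈ R ∪ C
  disj : List.Pairwise Disjoint [Set.range b, R, C]
  noBC : ∀ v ∈ C, ∀ i, ¬ G.Adj v (b i)
  rNbr : ∀ v ∈ R, ∃ i, G.Adj v (b i)
  lMin : ∀ j : Fin p, j < l → ¬ G.Adj (b j) (b ⟨p - 1, Nat.sub_lt pos Nat.one_pos⟩)
  lNbr : l.val = p - 1 ∨ G.Adj (b l) (b ⟨p - 1, Nat.sub_lt pos Nat.one_pos⟩)
  noEarlyR : ∀ j : Fin p, j < l → ∀ r ∈ R, ¬ G.Adj r (b j)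
  rMono : ∀ i j : Fin p, l ≤ i → i.val + 1 = j.val → ∀ r ∈ R,
    G.Adj (b i) r → G.Adj (b j) r

/-- `b : Fin p → V` enumerates (in umbrella order) a 2-branch of `G` with
complement partitioned into `L`, `R`, `C`; `b l` is the neighbor of `b (p-1)`
of minimal index and `b l'` is the neighbor of `b 0` of maximal index.  The
attachment cliques are `B₁ = {b i : i ≤ l'}` and `B₂ = {b i : l ≤ i}`, and
`B^R = {b i : l' < i < l}`. -/
structure TwoBranch (G : SimpleGraph V) {p : ℕ} (b : Fin p → V)
    (L R C : Set V) (l l' : Fin p) : Prop where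
  pos : 0 < p
  inj : Function.Injective b
  umbrella : ∀ i j m : Fin p, i < j → j < m → G.Adj (b i) (b m) →
    G.Adj (b i) (b j) ∧ G.Adj (b j) (b m)
  connB : (G.induce (Set.range b)).Connected
  cover : ∀ v : V, v ∉ Set.range b → v ∈ L ∪ R ∪ C
  disj : List.Pairwise Disjoint [Set.range b, L, R, C]
  noBC : ∀ v ∈ C, ∀ i, ¬ G.Adj v (b i)
  lNbrEx : ∀ v ∈ L, ∃ i, G.Adj v (b i)
  rNbrEx : ∀ v ∈ R, ∃ i, G.Adj v (b i)
  lMin : ∀ j : Fin p, j < l → ¬ G.Adj (b j) (b ⟨p - 1, Nat.sub_lt pos Nat.one_pos⟩)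
  lNbr : l.val = p - 1 ∨ G.Adj (b l) (b ⟨p - 1, Nat.sub_lt pos Nat.one_pos⟩)
  lMax' : ∀ j : Fin p, l' < j → ¬ G.Adj (b ⟨0, pos⟩) (b j)
  lNbr' : l'.val = 0 ∨ G.Adj (b ⟨0, pos⟩) (b l')
  noEarlyR : ∀ j : Fin p, j < l → ∀ r ∈ R, ¬ G.Adj r (b j)
  noLateL : ∀ j : Fin p, l' < j → ∀ v ∈ L, ¬ G.Adj v (b j)
  rMono : ∀ i j : Fin p, l ≤ i → i.val + 1 = j.val → ∀ r ∈ R,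
    G.Adj (b i) r → G.Adj (b j) r
  lMono : ∀ i j : Fin p, j ≤ l' → i.val + 1 = j.val → ∀ v ∈ L,
    G.Adj (b j) v → G.Adj (b i) v

/-- `e : Fin q → Fin p` lists the last indices of the `q` K-joins of the
K-join decomposition of the 2-branch enumerated by `b` (with attachment
cliques ending at `l'` resp. starting at `l`). -/
def KJoinDecomp (G : SimpleGraph V) {p : ℕ} (b : Fin p → V) (l l' : Fin p)
    (q : ℕ) (e : Fin q → Fin p) : Prop :=
  0 < q ∧
  (∀ i : Fin q, i.val = 0 → e i = l') ∧
  (∀ i : Fin q, i.val = q - 1 → (e i).val = p - 1) ∧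
  StrictMono e ∧
  ∀ i j : Fin q, i.val + 1 = j.val →
    ∃ hs : (e i).val + 1 < p,
      (j.val + 1 < q →
        (⟨(e i).val + 1, hs⟩ : Fin p) < l ∧
        G.Adj (b ⟨(e i).val + 1, hs⟩) (b (e j)) ∧
        ∀ m : Fin p, G.Adj (b ⟨(e i).val + 1, hs⟩) (b m) → m ≤ e j) ∧
      (j.val + 1 = q → l ≤ (⟨(e i).val + 1, hs⟩ : Fin p))

/-- `G` is a bi-clique chain graph: two cliques joined by a join. -/
def IsBicliqueChain (G : SimpleGraph V) : Prop :=
  ∃ (q : ℕ) (x : Fin q → V) (Y : Set V),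
    Function.Injective x ∧
    Disjoint (Set.range x) Y ∧
    (∀ v : V, v ∈ Set.range x ∨ v ∈ Y) ∧
    (∀ i j : Fin q, i ≠ j → G.Adj (x i) (x j)) ∧
    G.IsClique Y ∧
    (∀ i j : Fin q, i ≤ j → ∀ y ∈ Y, G.Adj (x i) y → G.Adj (x j) y)

/-- `F` is a bcc-`k`-completion of `G`. -/
def IsBccKCompletion (G : SimpleGraph V) (k : ℕ) (F : Finset (Sym2 V)) : Prop :=
  (∀ e ∈ F, ¬ e.IsDiag) ∧ (∀ e ∈ F, e ∉ G.edgeSet) ∧ F.card ≤ k ∧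
    IsBicliqueChain (addEdges G F)

/-!
Fix a `k`-completion `F`. Since proper interval graphs have no claw and no induced 4-cycle, every
claw has two leaves joined by a pair of `F` and every induced 4-cycle has a diagonal in `F`. Hence
the set `M` of endpoints of pairs of `F`, together with the third leaves of claws on such a pair,
contains every claw leaf, and sunflower-reducedness bounds it by `k (k + 2)`. A vertex of the
clique `B` on a claw or 4-cycle but outside `M` either lies on an induced 4-cycle whose other
diagonal is a pair of `F` (at most `k` per pair, as `B` is a clique), or is the center of a claw
and on no induced 4-cycle. Two such centers that are not true twins are separated by a vertex of
`M ∩ (L ∪ R)`; as neighbourhoods in `R` grow and those in `L` shrink along `B`, this separation is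
seen in the size of a nested profile, leaving at most `|M ∩ (L ∪ R)| + 1` twin classes of at most
`k + 1` vertices each.
-/

section Configurations

variable {G : SimpleGraph V}

lemma IsClaw.swap₁₂ {c a b d : V} (h : IsClaw G c a b d) : IsClaw G c b a d := by
  obtain ⟨h1, h2, h3, h4, h5, h6, h7, h8, h9⟩ := h
  exact ⟨h2, h1, h3, fun h => h4 h.symm, h6, h5, h7.symm, h9, h8⟩

lemma IsClaw.swap₂₃ {c a b d : V} (h : IsClaw G c a b d) : IsClaw G c a d b := by
  obtain ⟨h1, h2, h3, h4, h5, h6, h7, h8, h9⟩ := h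
  exact ⟨h1, h3, h2, h5, h4, fun h => h6 h.symm, h8, h7, h9.symm⟩

lemma IsInducedC4.rotate {a b c d : V} (h : IsInducedC4 G a b c d) : IsInducedC4 G b c d a := by
  obtain ⟨h1, h2, h3, h4, h5, h6, h7, h8⟩ := h
  exact ⟨h2, h3, h4, h1, h6, fun h => h5 h.symm, h8, h7.symm⟩

lemma IsInducedC4.reflect {a b c d : V} (h : IsInducedC4 G a b c d) :
    IsInducedC4 G a d c b := by
  obtain ⟨h1, h2, h3, h4, h5, h6, h7, h8⟩ := h
  exact ⟨h4.symm, h3.symm, h2.symm, h1.symm, h5, fun h => h6 h.symm, h7, h8.symm⟩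

lemma IsInducedC4.swap₁₃ {a b c d : V} (h : IsInducedC4 G a b c d) : IsInducedC4 G c b a d :=
  h.rotate.rotate.rotate.reflect.rotate

lemma InClaw.isCenter_or_isLeaf {x : V} (h : InClaw G x) :
    (∃ a b d, IsClaw G x a b d) ∨ ∃ c a b, IsClaw G c x a b := by
  obtain ⟨c, a, b, d, h, rfl | rfl | rfl | rfl⟩ := h
  · exact .inl ⟨a, b, d, h⟩
  · exact .inr ⟨c, b, d, h⟩
  · exact .inr ⟨c, a, d, h.swap₁₂⟩
  · exact .inr ⟨c, a, b, h.swap₂₃.swap₁₂⟩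

lemma InC4.exists_isInducedC4 {x : V} (h : InC4 G x) : ∃ a c d, IsInducedC4 G a x c d := by
  obtain ⟨a, b, c, d, h, rfl | rfl | rfl | rfl⟩ := h
  · exact ⟨d, b, c, h.rotate.rotate.rotate⟩
  · exact ⟨a, c, d, h⟩
  · exact ⟨b, d, a, h.rotate⟩
  · exact ⟨c, a, b, h.rotate.rotate⟩

end Configurations

namespace IsUmbrellaOrdering

variable {G : SimpleGraph V} {f : V → ℕ}

lemma adj_of_same_side (hf : IsUmbrellaOrdering G f) {c x y : V} (hx : G.Adj c x)
    (hy : G.Adj c y) (hxy : x ≠ y) (hside : f x < f c ↔ f y < f c) : G.Adj x y := by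
  wlog hlt : f x < f y generalizing x y
  · exact (this hy hx hxy.symm hside.symm
      (lt_of_le_of_ne (not_lt.1 hlt) fun h => hxy (hf.1 h).symm)).symm
  have hyc : f y ≠ f c := fun h => G.ne_of_adj hy (hf.1 h).symm
  rcases lt_or_gt_of_ne hyc with hyc | hyc
  · exact (hf.2 x y c hlt hyc hx.symm).1
  · have hcx : f c < f x := by
      have hxc : f x ≠ f c := fun h => G.ne_of_adj hx (hf.1 h).symm
      have := hside.not.2 (by omega)
      omega
    exact (hf.2 c x y hcx hlt hy).2

lemma not_isClaw (hf : IsUmbrellaOrdering G f) {c a b d : V} : ¬ IsClaw G c a b d := by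
  rintro ⟨hca, hcb, hcd, hab, had, hbd, hab', had', hbd'⟩
  by_cases h₁ : f a < f c ↔ f b < f c
  · exact hab (hf.adj_of_same_side hca hcb hab' h₁)
  by_cases h₂ : f a < f c ↔ f d < f c
  · exact had (hf.adj_of_same_side hca hcd had' h₂)
  exact hbd (hf.adj_of_same_side hcb hcd hbd' (by tauto))

lemma not_isInducedC4 (hf : IsUmbrellaOrdering G f) {a b c d : V} :
    ¬ IsInducedC4 G a b c d := by
  intro h
  wlog hac : f a < f c generalizing a c
  · exact this h.swap₁₃ (lt_of_le_of_ne (not_lt.1 hac) fun e => h.2.2.2.2.2.2.1 (hf.1 e).symm)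
  wlog hbd : f b < f d generalizing b d
  · exact this h.reflect (lt_of_le_of_ne (not_lt.1 hbd) fun e => h.2.2.2.2.2.2.2 (hf.1 e).symm)
  obtain ⟨hab, hbc, -, hda, hac', hbd', -, -⟩ := h
  rcases lt_or_gt_of_ne fun e => G.ne_of_adj hab (hf.1 e) with h | h
  · exact hbd' (hf.2 a b d h hbd hda.symm).2
  · exact hac' (hf.2 b a c h hac hbc).2

end IsUmbrellaOrdering

lemma addEdges_adj {G : SimpleGraph V} {F : Finset (Sym2 V)} {x y : V} :
    (addEdges G F).Adj x y ↔ G.Adj x y ∨ (s(x, y) ∈ F ∧ x ≠ y) := by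
  simp [addEdges, SimpleGraph.fromEdgeSet_adj]

lemma ncard_setOf_exists_sym2_mem_le [Finite V] (F : Finset (Sym2 V)) {P : V → V → V → Prop}
    {m : ℕ} (hP : ∀ u v x, P u v x → P v u x)
    (hm : ∀ u v, s(u, v) ∈ F → {x | P u v x}.ncard ≤ m) :
    {x | ∃ u v, s(u, v) ∈ F ∧ P u v x}.ncard ≤ F.card * m := by
  have hsub : {x | ∃ u v, s(u, v) ∈ F ∧ P u v x} ⊆
      ⋃ e ∈ F, {x | ∃ u v, e = s(u, v) ∧ P u v x} := by
    rintro x ⟨u, v, he, hx⟩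
    exact Set.mem_biUnion he ⟨u, v, rfl, hx⟩
  have hedge : ∀ e ∈ F, {x | ∃ u v, e = s(u, v) ∧ P u v x}.ncard ≤ m := by
    intro e he
    induction e using Sym2.ind with
    | _ u v =>
      refine le_trans (Set.ncard_le_ncard ?_) (hm u v he)
      rintro x ⟨u', v', huv, hx⟩
      rcases Sym2.eq_iff.1 huv with ⟨rfl, rfl⟩ | ⟨rfl, rfl⟩
      exacts [hx, hP _ _ _ hx]
  calc _ ≤ _ := Set.ncard_le_ncard hsub
    _ ≤ ∑ e ∈ F, {x | ∃ u v, e = s(u, v) ∧ P u v x}.ncard := F.set_ncard_biUnion_le _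
    _ ≤ ∑ _e ∈ F, m := Finset.sum_le_sum hedge
    _ = F.card * m := by rw [Finset.sum_const, smul_eq_mul]

def markedVertices (G : SimpleGraph V) (F : Finset (Sym2 V)) : Set V :=
  {x | ∃ u v, s(u, v) ∈ F ∧ (x = u ∨ x = v ∨ ∃ c, IsClaw G c u v x)}

namespace IsCompletion

variable {G : SimpleGraph V} {F : Finset (Sym2 V)}

lemma ne_and_not_adj (hF : IsCompletion G F) {u v : V} (huv : s(u, v) ∈ F) :
    u ≠ v ∧ ¬ G.Adj u v :=
  ⟨fun h => hF.1 _ huv (Sym2.mk_isDiag_iff.2 h), fun h => hF.2.1 _ huv h⟩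

lemma exists_leaf_pair_mem {c a b d : V} (hF : IsCompletion G F) (h : IsClaw G c a b d) :
    s(a, b) ∈ F ∨ s(a, d) ∈ F ∨ s(b, d) ∈ F := by
  obtain ⟨f, hf⟩ := hF.2.2
  by_contra! hn
  obtain ⟨hca, hcb, hcd, hab, had, hbd, hab', had', hbd'⟩ := h
  exact hf.not_isClaw (c := c) (a := a) (b := b) (d := d)
    ⟨addEdges_adj.2 (.inl hca), addEdges_adj.2 (.inl hcb), addEdges_adj.2 (.inl hcd),
      by simp [addEdges_adj, *], by simp [addEdges_adj, *], by simp [addEdges_adj, *],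
      hab', had', hbd'⟩

lemma exists_diagonal_mem {a b c d : V} (hF : IsCompletion G F) (h : IsInducedC4 G a b c d) :
    s(a, c) ∈ F ∨ s(b, d) ∈ F := by
  obtain ⟨f, hf⟩ := hF.2.2
  by_contra! hn
  obtain ⟨hab, hbc, hcd, hda, hac, hbd, hac', hbd'⟩ := h
  exact hf.not_isInducedC4 (a := a) (b := b) (c := c) (d := d)
    ⟨addEdges_adj.2 (.inl hab), addEdges_adj.2 (.inl hbc), addEdges_adj.2 (.inl hcd),
      addEdges_adj.2 (.inl hda), by simp [addEdges_adj, *], by simp [addEdges_adj, *],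
      hac', hbd'⟩

lemma ncard_markedVertices_le [Finite V] {k : ℕ} (hF : IsCompletion G F)
    (hred : SunflowerReduced G k) : (markedVertices G F).ncard ≤ F.card * (k + 2) := by
  refine ncard_setOf_exists_sym2_mem_le F ?_ fun u v huv => ?_
  · rintro u v x (rfl | rfl | ⟨c, h⟩)
    exacts [.inr (.inl rfl), .inl rfl, .inr (.inr ⟨c, h.swap₁₂⟩)]
  · obtain ⟨hne, hnadj⟩ := hF.ne_and_not_adj huv
    have hset : {x | x = u ∨ x = v ∨ ∃ c, IsClaw G c u v x} =
        insert u (insert v {w | ∃ c, IsClaw G c u v w}) := rfl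
    rw [hset]
    have := (hred u v hne hnadj).1
    grw [Set.ncard_insert_le, Set.ncard_insert_le]
    omega

lemma mem_markedVertices_of_isClaw (hF : IsCompletion G F) {c a b d : V}
    (h : IsClaw G c a b d) : a ∈ markedVertices G F := by
  rcases hF.exists_leaf_pair_mem h with hab | had | hbd
  · exact ⟨a, b, hab, .inl rfl⟩
  · exact ⟨a, d, had, .inl rfl⟩
  · exact ⟨b, d, hbd, .inr (.inr ⟨c, h.swap₁₂.swap₂₃⟩)⟩

lemma ncard_clique_inC4_le [Finite V] {k : ℕ} (hF : IsCompletion G F)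
    (hred : SunflowerReduced G k) {B : Set V} (hB : G.IsClique B) :
    {x ∈ B | x ∉ markedVertices G F ∧ InC4 G x}.ncard ≤ F.card * k := by
  have hsub : {x ∈ B | x ∉ markedVertices G F ∧ InC4 G x} ⊆
      {x | ∃ u v, s(u, v) ∈ F ∧ (x ∈ B ∧ ∃ t, IsInducedC4 G u x v t)} := by
    rintro x ⟨hxB, hxM, hx⟩
    obtain ⟨a, c, d, h⟩ := hx.exists_isInducedC4
    rcases hF.exists_diagonal_mem h with hac | hxd
    · exact ⟨a, c, hac, hxB, d, h⟩
    · exact absurd ⟨x, d, hxd, .inl rfl⟩ hxM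
  refine le_trans (Set.ncard_le_ncard hsub) (ncard_setOf_exists_sym2_mem_le F ?_ ?_)
  · rintro u v x ⟨hxB, t, h⟩
    exact ⟨hxB, t, h.swap₁₃⟩
  · intro u v huv
    obtain ⟨hne, hnadj⟩ := hF.ne_and_not_adj huv
    have hex : ∀ x ∈ {x | x ∈ B ∧ ∃ t, IsInducedC4 G u x v t}, ∃ t, IsInducedC4 G u x v t :=
      fun x hx => hx.2
    choose! t ht using hex
    refine le_trans (Set.ncard_le_ncard_of_injOn (fun x => s(x, t x)) ?_ ?_)
      (hred u v hne hnadj).2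
    · exact fun x hx => ⟨x, t x, rfl, ht x hx⟩
    · -- two vertices of the clique `B` are never opposite in an induced 4-cycle
      intro x hx y hy hxy
      rcases Sym2.eq_iff.1 hxy with ⟨h, -⟩ | ⟨h, -⟩
      · exact h
      · have hyt := ht y hy
        rw [← h] at hyt
        exact absurd (hB hy.1 hx.1 hyt.2.2.2.2.2.2.2) hyt.2.2.2.2.2.1

end IsCompletion

section Distinguishers

variable {G : SimpleGraph V}

lemma exists_not_adj_iff_of_not_trueTwins {x y : V} (hxy : G.Adj x y)
    (h : ¬ TrueTwins G x y) : ∃ z, z ≠ x ∧ z ≠ y ∧ ¬ (G.Adj z x ↔ G.Adj z y) := by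
  obtain ⟨z, hz⟩ := not_forall.1 (mt Set.ext h)
  simp only [Set.mem_insert_iff, mem_neighborSet] at hz
  have hzx : z ≠ x := by rintro rfl; exact hz (iff_of_true (.inl rfl) (.inr hxy.symm))
  have hzy : z ≠ y := by rintro rfl; exact hz (iff_of_true (.inr hxy) (.inl rfl))
  refine ⟨z, hzx, hzy, fun hiff => hz ?_⟩
  simp only [hzx, hzy, false_or, G.adj_comm x, G.adj_comm y, hiff]

variable {M : Set V} (hM : ∀ c l₁ l₂ l₃, IsClaw G c l₁ l₂ l₃ → l₁ ∈ M)
include hM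

/-- `z` itself works if it lies in `M`. Otherwise `z` misses two leaves of the claw at `y` (two
common neighbours would give an induced 4-cycle through `y`), and one of them separates `x` from
`y` unless `x`, `z` and these two leaves form a claw, which would put `z` in `M`. -/
lemma exists_mem_not_adj_iff_of_isClaw {x y z l₁ l₂ l₃ : V} (hy : IsClaw G y l₁ l₂ l₃)
    (hyC4 : ¬ InC4 G y) (hzx : G.Adj z x) (hzy : ¬ G.Adj z y) (hzy_ne : z ≠ y) :
    ∃ t ∈ M, ¬ (G.Adj t x ↔ G.Adj t y) := by
  by_cases hzM : z ∈ M
  · exact ⟨z, hzM, by simp [hzx, hzy]⟩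
  have hpair : ∀ {s t w}, IsClaw G y s t w → ¬ G.Adj z s → ¬ G.Adj z t →
      ∃ t ∈ M, ¬ (G.Adj t x ↔ G.Adj t y) := by
    intro s t w h hzs hzt
    have hsM := hM _ _ _ _ h
    have htM := hM _ _ _ _ h.swap₁₂
    by_cases hxs : G.Adj s x
    · by_cases hxt : G.Adj t x
      · exact absurd (hM x z s t ⟨hzx.symm, hxs.symm, hxt.symm, hzs, hzt, h.2.2.2.1,
          fun e => hzM (e ▸ hsM), fun e => hzM (e ▸ htM), h.2.2.2.2.2.2.1⟩) hzM
      · exact ⟨t, htM, by simp [hxt, h.2.1.symm]⟩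
    · exact ⟨s, hsM, by simp [hxs, h.1.symm]⟩
  have hC4 : ∀ {s t w}, IsClaw G y s t w → ¬ (G.Adj z s ∧ G.Adj z t) := by
    rintro s t w h ⟨hzs, hzt⟩
    exact hyC4 ⟨s, z, t, y, ⟨hzs.symm, hzt, h.2.1.symm, h.1, h.2.2.2.1, hzy,
      h.2.2.2.2.2.2.1, hzy_ne⟩, .inr (.inr (.inr rfl))⟩
  have h₁₂ := hC4 hy
  have h₁₃ := hC4 hy.swap₂₃
  have h₂₃ := hC4 hy.swap₁₂.swap₂₃
  by_cases hz₁ : G.Adj z l₁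
  · exact hpair hy.swap₁₂.swap₂₃ (by tauto) (by tauto)
  by_cases hz₂ : G.Adj z l₂
  · exact hpair hy.swap₂₃ hz₁ (by tauto)
  · exact hpair hy hz₁ hz₂

lemma exists_mem_not_adj_iff_of_not_trueTwins {x y : V} (hxy : G.Adj x y)
    (htw : ¬ TrueTwins G x y) (hx : ∃ a b c, IsClaw G x a b c) (hy : ∃ a b c, IsClaw G y a b c)
    (hxC4 : ¬ InC4 G x) (hyC4 : ¬ InC4 G y) : ∃ t ∈ M, ¬ (G.Adj t x ↔ G.Adj t y) := by
  obtain ⟨z, hzx, hzy, hz⟩ := exists_not_adj_iff_of_not_trueTwins hxy htw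
  obtain ⟨a, b, c, hx⟩ := hx
  obtain ⟨a', b', c', hy⟩ := hy
  by_cases hzx' : G.Adj z x
  · exact exists_mem_not_adj_iff_of_isClaw hM hy hyC4 hzx' (by tauto) hzy
  · obtain ⟨t, htM, ht⟩ :=
      exists_mem_not_adj_iff_of_isClaw hM hx hxC4 (y := x) (x := y) (by tauto) hzx' hzx
    exact ⟨t, htM, fun h => ht h.symm⟩

end Distinguishers

lemma Fin.monotone_of_adjacent {p : ℕ} {P : Fin p → Prop}
    (h : ∀ i j : Fin p, i.val + 1 = j.val → P i → P j) : Monotone P := by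
  cases p with
  | zero => exact fun i => i.elim0
  | succ n => exact Fin.monotone_iff_le_succ.2 fun i => h _ _ (by simp)

lemma ncard_le_of_nested_profiles {α β : Type*} [Finite α] [Finite β] {S : Set α}
    {T : Set β} {P : α → Set β} {c : ℕ} (hPT : ∀ x ∈ S, P x ⊆ T)
    (hchain : ∀ x ∈ S, ∀ y ∈ S, P x ⊆ P y ∨ P y ⊆ P x)
    (hfib : ∀ U ⊆ S, (∀ x ∈ U, ∀ y ∈ U, P x = P y) → U.ncard ≤ c) :
    S.ncard ≤ (T.ncard + 1) * c := by
  have hsub : S ⊆ ⋃ n ∈ Finset.range (T.ncard + 1), {x ∈ S | (P x).ncard = n} := fun x hx =>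
    Set.mem_biUnion (Finset.mem_range.2 (Nat.lt_succ_of_le (Set.ncard_le_ncard (hPT x hx))))
      ⟨hx, rfl⟩
  have hlevel : ∀ n, {x ∈ S | (P x).ncard = n}.ncard ≤ c := by
    refine fun n => hfib _ (fun x hx => hx.1) fun x ⟨hx, hxn⟩ y ⟨hy, hyn⟩ => ?_
    rcases hchain x hx y hy with h | h
    · exact Set.eq_of_subset_of_ncard_le h (by omega)
    · exact (Set.eq_of_subset_of_ncard_le h (by omega)).symm
  calc S.ncard ≤ _ := Set.ncard_le_ncard hsub
    _ ≤ ∑ n ∈ Finset.range (T.ncard + 1), {x ∈ S | (P x).ncard = n}.ncard :=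
        Finset.set_ncard_biUnion_le _ _
    _ ≤ ∑ _n ∈ Finset.range (T.ncard + 1), c := Finset.sum_le_sum fun n _ => hlevel n
    _ = (T.ncard + 1) * c := by rw [Finset.sum_const, Finset.card_range, smul_eq_mul]

/-- For a `K`-join these sets grow along the ordering of `B`: a vertex of `R` is gained once it
becomes adjacent, a vertex of `L` once it stops being adjacent. -/
def sideProfile (G : SimpleGraph V) (L R T : Set V) (x : V) : Set V :=
  {t ∈ T | t ∈ R ∧ G.Adj t x ∨ t ∈ L ∧ ¬ G.Adj t x}

lemma adj_iff_of_sideProfile_eq {G : SimpleGraph V} {L R T : Set V} (hLR : Disjoint L R)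
    {x y t : V} (h : sideProfile G L R T x = sideProfile G L R T y) (ht : t ∈ T)
    (htLR : t ∈ L ∪ R) : G.Adj t x ↔ G.Adj t y := by
  have := Set.ext_iff.1 h t
  rcases htLR with htL | htR
  · simp [sideProfile, ht, htL, Set.disjoint_left.1 hLR htL] at this
    exact not_iff_not.1 this
  · simp [sideProfile, ht, htR, Set.disjoint_right.1 hLR htR] at this
    exact this

namespace KJoinWith

variable {G : SimpleGraph V} {p : ℕ} {b : Fin p → V} {N L R C : Set V}

lemma disjoint_range_L_R (hK : KJoinWith G b N L R C) :
    Disjoint (Set.range b) L ∧ Disjoint (Set.range b) R ∧ Disjoint L R := by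
  have h := hK.disj
  simp only [List.pairwise_cons, List.mem_cons, List.not_mem_nil, or_false,
    forall_eq_or_imp, forall_eq] at h
  exact ⟨h.1.2.1, h.1.2.2.1, h.2.2.1.1⟩

lemma adj_mono_of_mem_R (hK : KJoinWith G b N L R C) {r : V} (hr : r ∈ R) :
    Monotone fun i => G.Adj r (b i) :=
  Fin.monotone_of_adjacent fun i j hij h => (hK.rMono i j hij r hr h.symm).symm

lemma adj_antitone_of_mem_L (hK : KJoinWith G b N L R C) {x : V} (hx : x ∈ L) :
    Antitone fun i => G.Adj x (b i) := by
  intro i j hij h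
  by_contra hi
  exact Fin.monotone_of_adjacent (P := fun i => ¬ G.Adj x (b i))
    (fun i j hij hi hj => hi (hK.lMono i j hij x hx hj.symm).symm) hij hi h

lemma sideProfile_mono (hK : KJoinWith G b N L R C) (T : Set V) :
    Monotone fun i => sideProfile G L R T (b i) := by
  rintro i j hij t ⟨htT, ⟨htR, hti⟩ | ⟨htL, hti⟩⟩
  · exact ⟨htT, .inl ⟨htR, hK.adj_mono_of_mem_R htR hij hti⟩⟩
  · exact ⟨htT, .inr ⟨htL, fun htj => hti (hK.adj_antitone_of_mem_L htL hij htj)⟩⟩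

lemma mem_L_union_R_of_not_adj_iff (hK : KJoinWith G b N L R C) {t : V} {i j : Fin p}
    (hti : t ≠ b i) (htj : t ≠ b j) (h : ¬ (G.Adj t (b i) ↔ G.Adj t (b j))) : t ∈ L ∪ R := by
  by_cases htB : t ∈ Set.range b
  · obtain ⟨m, rfl⟩ := htB
    exact absurd (iff_of_true (hK.clique m i fun e => hti (e ▸ rfl))
      (hK.clique m j fun e => htj (e ▸ rfl))) h
  rcases hK.cover t htB with ((htN | htL) | htR) | htC
  · exact absurd (iff_of_true (hK.nAdj t htN i) (hK.nAdj t htN j)) h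
  · exact .inl htL
  · exact .inr htR
  · exact absurd (iff_of_false (hK.cNotAdj t htC i) (hK.cNotAdj t htC j)) h

lemma ncard_clawCenters_le [Finite V] (hK : KJoinWith G b N L R C) {M : Set V}
    (hM : ∀ c l₁ l₂ l₃, IsClaw G c l₁ l₂ l₃ → l₁ ∈ M) {k : ℕ}
    (htwins : ∀ T : Set V, (∀ u ∈ T, ∀ v ∈ T, TrueTwins G u v) → T.ncard ≤ k + 1) :
    {x ∈ Set.range b | x ∉ M ∧ ¬ InC4 G x ∧ ∃ a b c, IsClaw G x a b c}.ncard ≤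
      ((M ∩ (L ∪ R)).ncard + 1) * (k + 1) := by
  refine ncard_le_of_nested_profiles (P := sideProfile G L R (M ∩ (L ∪ R)))
    (fun _ _ => Set.sep_subset _ _) ?_ fun U hU hprof => htwins U fun u hu v hv => ?_
  · rintro _ ⟨⟨i, rfl⟩, -⟩ _ ⟨⟨j, rfl⟩, -⟩
    rcases le_total i j with hij | hji
    exacts [.inl (hK.sideProfile_mono _ hij), .inr (hK.sideProfile_mono _ hji)]
  obtain ⟨⟨i, rfl⟩, huM, huC4, hucenter⟩ := hU hu
  obtain ⟨⟨j, rfl⟩, hvM, hvC4, hvcenter⟩ := hU hv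
  by_cases hij : i = j
  · rw [hij]; rfl
  by_contra htw
  obtain ⟨t, htM, ht⟩ := exists_mem_not_adj_iff_of_not_trueTwins hM (hK.clique i j hij) htw
    hucenter hvcenter huC4 hvC4
  have htLR := hK.mem_L_union_R_of_not_adj_iff (fun e => huM (e ▸ htM))
    (fun e => hvM (e ▸ htM)) ht
  exact ht (adj_iff_of_sideProfile_eq hK.disjoint_range_L_R.2.2 (hprof _ hu _ hv)
    ⟨htM, htLR⟩ htLR)

lemma ncard_inClaw_or_inC4_le [Finite V] (hK : KJoinWith G b N L R C)
    {F : Finset (Sym2 V)} (hF : IsCompletion G F) {k : ℕ} (hFk : F.card ≤ k)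
    (hred : SunflowerReduced G k)
    (htwins : ∀ T : Set V, (∀ u ∈ T, ∀ v ∈ T, TrueTwins G u v) → T.ncard ≤ k + 1) :
    {x ∈ Set.range b | InClaw G x ∨ InC4 G x}.ncard ≤ k ^ 3 + 4 * k ^ 2 + 5 * k + 1 := by
  set M := markedVertices G F
  have hM : ∀ c l₁ l₂ l₃, IsClaw G c l₁ l₂ l₃ → l₁ ∈ M :=
    fun _ _ _ _ => hF.mem_markedVertices_of_isClaw
  have hclique : G.IsClique (Set.range b) := by
    rintro _ ⟨i, rfl⟩ _ ⟨j, rfl⟩ hne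
    exact hK.clique i j fun e => hne (e ▸ rfl)
  have hsplit : {x ∈ Set.range b | InClaw G x ∨ InC4 G x} ⊆ (Set.range b ∩ M) ∪
      ({x ∈ Set.range b | x ∉ M ∧ InC4 G x} ∪
        {x ∈ Set.range b | x ∉ M ∧ ¬ InC4 G x ∧ ∃ a b c, IsClaw G x a b c}) := by
    rintro x ⟨hxB, hx⟩
    by_cases hxM : x ∈ M
    · exact .inl ⟨hxB, hxM⟩
    by_cases hxC4 : InC4 G x
    · exact .inr (.inl ⟨hxB, hxM, hxC4⟩)
    rcases (hx.resolve_right hxC4).isCenter_or_isLeaf with hc | ⟨c, a, d, h⟩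
    · exact .inr (.inr ⟨hxB, hxM, hxC4, hc⟩)
    · exact absurd (hM _ _ _ _ h) hxM
  have hmarked : (Set.range b ∩ M).ncard + (M ∩ (L ∪ R)).ncard ≤ k * (k + 2) := by
    have hdisj : Disjoint (Set.range b ∩ M) (M ∩ (L ∪ R)) := by
      obtain ⟨hBL, hBR, -⟩ := hK.disjoint_range_L_R
      exact Disjoint.mono Set.inter_subset_left Set.inter_subset_right
        (Disjoint.union_right hBL hBR)
    rw [← Set.ncard_union_eq hdisj]
    calc _ ≤ M.ncard := Set.ncard_le_ncard (Set.union_subset Set.inter_subset_right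
          Set.inter_subset_left)
      _ ≤ F.card * (k + 2) := hF.ncard_markedVertices_le hred
      _ ≤ k * (k + 2) := Nat.mul_le_mul_right _ hFk
  have hC4 := le_trans (hF.ncard_clique_inC4_le hred hclique) (Nat.mul_le_mul_right k hFk)
  have hcenters := hK.ncard_clawCenters_le hM htwins
  grw [Set.ncard_le_ncard hsplit, Set.ncard_union_le, Set.ncard_union_le, hC4, hcenters]
  nlinarith

end KJoinWith

/-- In a sunflower-reduced positive instance whose sets of pairwise true
twins have at most `k + 1` vertices, every `K`-join has at most
`k³ + 4k² + 5k + 1` vertices belonging to a claw or to an induced 4-cycle. -/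
theorem kjoin_few_dirty_vertices [Fintype V] (G : SimpleGraph V) (k : ℕ)
    (hpos : ∃ F : Finset (Sym2 V), IsKCompletion G k F)
    (hred : SunflowerReduced G k)
    (htwins : ∀ T : Set V, (∀ u ∈ T, ∀ v ∈ T, TrueTwins G u v) →
      T.ncard ≤ k + 1)
    (B : Set V) (hB : IsKJoin G B) :
    {x ∈ B | InClaw G x ∨ InC4 G x}.ncard ≤ k ^ 3 + 4 * k ^ 2 + 5 * k + 1 := by
  obtain ⟨F, hF, hFk⟩ := hpos
  obtain ⟨p, b, N, L, R, C, rfl, hK⟩ := hB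
  exact hK.ncard_inClaw_or_inC4_le hF hFk hred htwins
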